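/- arXiv:2604.07249 — 2 statements merged into one kernel-verified Lean document; each statement's English description precedes it below -/
import Mathlib

section
/- Consider the controlled complex Kuramoto system ẋ_k = i ω_k x_k + σ ∑_j a_{kj} x_j + u_k with the switched feedforward control |u_k| = |f_k(x)|, φ_{u_k} = φ_{x_k} + (π/2)(1 + sign(f_k(x))), where f_k(x) = σ ∑_j a_{kj} |x_j| cos(φ_{x_j} − φ_{x_k}). If |x_k(0)| = 1 for all k, then |x_k(t)| = 1 for all t ≥ 0 and all k, and the arguments φ_{x_k} satisfy exactly the real Kuramoto equations φ̇_{x_k} = ω_k + σ ∑_j a_{kj} sin(φ_{x_j} − φ_{x_k}). -/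
/-!
Write `x_k = r_k e^{iφ_k}`. Whatever the sign of `f_k`, the switched control is
`u_k = -f_k e^{iφ_k}`, and `f_k` is exactly the real part of
`e^{-iφ_k} σ ∑_j a_{kj} x_j`; so the control cancels it and
`e^{-iφ_k} ẋ_k = i (ω_k r_k + σ ∑_j a_{kj} r_j sin(φ_j - φ_k))` is purely imaginary.
In polar coordinates `e^{-iφ} ẋ = ṙ + i r φ̇`, hence `ṙ_k = 0`, so `r_k ≡ 1`, and
`φ̇_k` is the Kuramoto vector field.
-/

open Complex

theorem ofReal_abs_mul_exp_switched_phase (f φ : ℝ) :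
    ((|f| : ℝ) : ℂ) * exp (I * ((φ + Real.pi / 2 * (1 + Real.sign f) : ℝ) : ℂ)) =
      -(f : ℂ) * exp (I * φ) := by
  rcases lt_trichotomy f 0 with hf | rfl | hf
  · rw [Real.sign_of_neg hf, abs_of_neg hf]
    push_cast
    ring_nf
  · simp
  · rw [Real.sign_of_pos hf, abs_of_pos hf]
    have harg : I * ((φ + Real.pi / 2 * (1 + 1) : ℝ) : ℂ) = I * φ + Real.pi * I := by
      push_cast
      ring
    rw [harg, exp_add, exp_pi_mul_I]
    ring

theorem HasDerivAt.re_and_im_eq_zero_of_ofReal {r : ℝ → ℝ} {w : ℂ} {t : ℝ}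
    (h : HasDerivAt (fun s => (r s : ℂ)) w t) : HasDerivAt r w.re t ∧ w.im = 0 := by
  have hre := reCLM.hasFDerivAt.comp_hasDerivAt t h
  have him := imCLM.hasFDerivAt.comp_hasDerivAt t h
  simp only [Function.comp_def, reCLM_apply, imCLM_apply, ofReal_re, ofReal_im] at hre him
  exact ⟨hre, him.unique (hasDerivAt_const t 0)⟩

/-- In polar coordinates `z = r e^{iφ}` one has `z' e^{-iφ} = r' + i r φ'`. -/
theorem HasDerivAt.polar {z : ℝ → ℂ} {r φ : ℝ → ℝ} {z' : ℂ} {φ' t : ℝ}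
    (hz : HasDerivAt z z' t) (hφ : HasDerivAt φ φ' t)
    (hpolar : ∀ s, z s = r s * Complex.exp (I * (φ s : ℂ))) :
    HasDerivAt r (z' * Complex.exp (-(I * (φ t : ℂ)))).re t ∧
      (z' * Complex.exp (-(I * (φ t : ℂ)))).im = r t * φ' := by
  have hr : (fun s => (r s : ℂ)) = fun s => z s * Complex.exp (-(I * (φ s : ℂ))) := by
    funext s
    rw [hpolar s, mul_assoc, ← exp_add, add_neg_cancel, exp_zero, mul_one]
  have hderiv : HasDerivAt (fun s => z s * Complex.exp (-(I * (φ s : ℂ))))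
      (z' * Complex.exp (-(I * (φ t : ℂ))) +
        z t * (Complex.exp (-(I * (φ t : ℂ))) * -(I * φ'))) t :=
    hz.mul (hφ.ofReal_comp.const_mul I).neg.cexp
  rw [← hr, hpolar t, mul_assoc, ← mul_assoc (Complex.exp _), ← exp_add, add_neg_cancel, exp_zero,
    one_mul, show (r t : ℂ) * -(I * φ') = -(I * ((r t * φ' : ℝ) : ℂ)) by push_cast; ring]
    at hderiv
  obtain ⟨hre, him⟩ := hderiv.re_and_im_eq_zero_of_ofReal
  simp only [add_re, add_im, neg_re, neg_im, I_mul_re, I_mul_im, ofReal_re, ofReal_im,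
    neg_zero, add_zero] at hre him
  exact ⟨hre, by linarith⟩

theorem sum_mul_polar_mul_exp_neg {ι : Type*} [Fintype ι] (c r φ : ι → ℝ) (θ : ℝ) :
    (∑ j, (c j : ℂ) * ((r j : ℂ) * exp (I * φ j))) * exp (-(I * θ)) =
      ((∑ j, c j * r j * Real.cos (φ j - θ) : ℝ) : ℂ) +
        I * ((∑ j, c j * r j * Real.sin (φ j - θ) : ℝ) : ℂ) := by
  push_cast
  rw [Finset.sum_mul, Finset.mul_sum, ← Finset.sum_add_distrib]
  refine Finset.sum_congr rfl fun j _ => ?_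
  rw [mul_assoc, mul_assoc, ← exp_add, show I * φ j + -(I * θ) = (φ j - θ : ℂ) * I by ring,
    exp_mul_I]
  ring

theorem switched_kuramoto_field_mul_exp_neg {ι : Type*} [Fintype ι] (ω σ : ℝ) (a r φ : ι → ℝ)
    (x : ι → ℂ) (hx : ∀ j, x j = r j * exp (I * φ j)) (k : ι) :
    (I * ω * x k + σ * ∑ j, (a j : ℂ) * x j -
        ((σ * ∑ j, a j * r j * Real.cos (φ j - φ k) : ℝ) : ℂ) * exp (I * φ k)) *
        exp (-(I * φ k)) =
      I * ((ω * r k + σ * ∑ j, a j * r j * Real.sin (φ j - φ k) : ℝ) : ℂ) := by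
  have hcancel : exp (I * φ k) * exp (-(I * φ k)) = 1 := by
    rw [← exp_add, add_neg_cancel, exp_zero]
  have hcoupling := sum_mul_polar_mul_exp_neg a r φ (φ k)
  simp only [hx]
  calc _ = I * ω * r k * (exp (I * φ k) * exp (-(I * φ k))) +
        σ * ((∑ j, (a j : ℂ) * (r j * exp (I * φ j))) * exp (-(I * φ k))) -
        ((σ * ∑ j, a j * r j * Real.cos (φ j - φ k) : ℝ) : ℂ) *
          (exp (I * φ k) * exp (-(I * φ k))) := by ring
    _ = _ := by
      rw [hcancel, hcoupling]
      push_cast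
      ring

theorem stmt5_general (N : ℕ) (ω : Fin N → ℝ) (σ : ℝ)
    (a : Fin N → Fin N → ℝ)
    (x : ℝ → Fin N → ℂ) (φ : ℝ → Fin N → ℝ)
    (hpolar : ∀ t k, x t k = (‖x t k‖ : ℂ) * Complex.exp (Complex.I * (φ t k : ℂ)))
    (hφ : ∀ k t, DifferentiableAt ℝ (fun s => φ s k) t)
    (f : ℝ → Fin N → ℝ)
    (hf : ∀ t k, f t k = σ * ∑ j, a k j * ‖x t j‖ * Real.cos (φ t j - φ t k))
    (u : ℝ → Fin N → ℂ)
    (hu : ∀ t k, u t k = ((|f t k| : ℝ) : ℂ) *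
      Complex.exp (Complex.I * ((φ t k + Real.pi / 2 * (1 + Real.sign (f t k)) : ℝ) : ℂ)))
    (hdyn : ∀ k t, HasDerivAt (fun s => x s k)
      (Complex.I * (ω k : ℂ) * x t k + (σ : ℂ) * ∑ j, (a k j : ℂ) * x t j + u t k) t)
    (hinit : ∀ k, ‖x 0 k‖ = 1) :
    (∀ t ≥ (0 : ℝ), ∀ k, ‖x t k‖ = 1) ∧
    (∀ t ≥ (0 : ℝ), ∀ k, deriv (fun s => φ s k) t
        = ω k + σ * ∑ j, a k j * Real.sin (φ t j - φ t k)) := by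
  have hpolar_deriv : ∀ k t, HasDerivAt (fun s => ‖x s k‖) 0 t ∧
      ω k * ‖x t k‖ + σ * ∑ j, a k j * ‖x t j‖ * Real.sin (φ t j - φ t k) =
        ‖x t k‖ * deriv (fun s => φ s k) t := by
    intro k t
    have h := HasDerivAt.polar (hdyn k t) (hφ k t).hasDerivAt (fun s => hpolar s k)
    rw [hu, ofReal_abs_mul_exp_switched_phase, hf, neg_mul, ← sub_eq_add_neg,
      switched_kuramoto_field_mul_exp_neg _ _ _ _ _ _ (hpolar t)] at h
    simpa only [I_mul_re, I_mul_im, ofReal_re, ofReal_im, neg_zero] using h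
  have hmod : ∀ t k, ‖x t k‖ = 1 := fun t k =>
    (is_const_of_deriv_eq_zero (fun s => (hpolar_deriv k s).1.differentiableAt)
      (fun s => (hpolar_deriv k s).1.deriv) t 0).trans (hinit k)
  refine ⟨fun t _ k => hmod t k, fun t _ k => ?_⟩
  have hphase := (hpolar_deriv k t).2
  simp only [hmod, mul_one, one_mul] at hphase
  exact hphase.symm

/-- Theorem 1 (switched feedforward control): under the control law
`|u_k| = |f_k(x)|`, `φ_{u_k} = φ_{x_k} + (π/2)(1 + sign f_k(x))`, if
`|x_k(0)| = 1` for all `k` then `|x_k(t)| = 1` for all `t ≥ 0`, and the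
arguments satisfy exactly the real Kuramoto equations. -/
theorem stmt5 (N : ℕ) (ω : Fin N → ℝ) (σ : ℝ) (hσ : 0 < σ)
    (a : Fin N → Fin N → ℝ)
    (hA : ∀ k j, a k j = 0 ∨ a k j = 1) (hdiag : ∀ k, a k k = 0)
    (x : ℝ → Fin N → ℂ) (φ : ℝ → Fin N → ℝ)
    (hne : ∀ t k, x t k ≠ 0)
    (hpolar : ∀ t k, x t k = (‖x t k‖ : ℂ) * Complex.exp (Complex.I * (φ t k : ℂ)))
    (hφ : ∀ k t, DifferentiableAt ℝ (fun s => φ s k) t)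
    (f : ℝ → Fin N → ℝ)
    (hf : ∀ t k, f t k = σ * ∑ j, a k j * ‖x t j‖ * Real.cos (φ t j - φ t k))
    (u : ℝ → Fin N → ℂ)
    (hu : ∀ t k, u t k = ((|f t k| : ℝ) : ℂ) *
      Complex.exp (Complex.I * ((φ t k + Real.pi / 2 * (1 + Real.sign (f t k)) : ℝ) : ℂ)))
    (hdyn : ∀ k t, HasDerivAt (fun s => x s k)
      (Complex.I * (ω k : ℂ) * x t k + (σ : ℂ) * ∑ j, (a k j : ℂ) * x t j + u t k) t)
    (hinit : ∀ k, ‖x 0 k‖ = 1) :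
    (∀ t ≥ (0 : ℝ), ∀ k, ‖x t k‖ = 1) ∧
    (∀ t ≥ (0 : ℝ), ∀ k, deriv (fun s => φ s k) t
        = ω k + σ * ∑ j, a k j * Real.sin (φ t j - φ t k)) :=
  stmt5_general N ω σ a x φ hpolar hφ f hf u hu hdyn hinit
end

section
/- Suppose x: ℝ → ℂ^N is differentiable, satisfies ẋ = (i diag(ω) + σA)x, and |x_k(t)| = c > 0 for all k and t (constant common modulus). Then the arguments θ_k(t) = arg x_k(t) satisfy the real Kuramoto model θ̇_k = ω_k + σ ∑_j a_{kj} sin(θ_j − θ_k). -/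
/-!
Differentiating `x_k = c e^{iθ_k}` gives `ẋ_k = i θ̇_k x_k`, so `θ̇_k = Im (ẋ_k / x_k)`.
Dividing the linear dynamics by `x_k` and using `x_j / x_k = e^{i(θ_j - θ_k)}` (the common
modulus cancels) turns the imaginary part into `ω_k + σ ∑_j a_{kj} sin (θ_j - θ_k)`.
-/

open Complex

theorem deriv_phase_eq_im_div {r : ℂ} (hr : r ≠ 0) {θ : ℝ → ℝ} {z : ℝ → ℂ} {z' : ℂ} {t : ℝ}
    (hpolar : ∀ s, z s = r * exp (I * θ s)) (hz : HasDerivAt z z' t)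
    (hθ : DifferentiableAt ℝ θ t) : deriv θ t = (z' / z t).im := by
  have hz_ne : z t ≠ 0 := by rw [hpolar]; exact mul_ne_zero hr (exp_ne_zero _)
  have hpolar_deriv : HasDerivAt z (I * deriv θ t * z t) t := by
    rw [funext hpolar]
    exact (((hθ.hasDerivAt.ofReal_comp.const_mul I).cexp).const_mul r).congr_deriv (by ring)
  rw [hz.unique hpolar_deriv, mul_div_cancel_right₀ _ hz_ne]
  simp

theorem mul_cexp_div_mul_cexp {r : ℂ} (hr : r ≠ 0) (α β : ℝ) :
    r * exp (I * α) / (r * exp (I * β)) = exp ((α - β : ℝ) * I) := by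
  rw [mul_div_mul_left _ _ hr, ← exp_sub]
  push_cast
  ring_nf

theorem stmt17_general (N : ℕ) (ω : Fin N → ℝ) (σ : ℝ)
    (a : Fin N → Fin N → ℝ)
    (c : ℝ) (hc : 0 < c)
    (x : ℝ → Fin N → ℂ) (θ : ℝ → Fin N → ℝ)
    (hdyn : ∀ k t, HasDerivAt (fun s => x s k)
      (Complex.I * (ω k : ℂ) * x t k + (σ : ℂ) * ∑ j, (a k j : ℂ) * x t j) t)
    (hpolar : ∀ t k, x t k = (c : ℂ) * Complex.exp (Complex.I * (θ t k : ℂ)))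
    (hθ : ∀ k t, DifferentiableAt ℝ (fun s => θ s k) t) :
    ∀ k t, deriv (fun s => θ s k) t
      = ω k + σ * ∑ j, a k j * Real.sin (θ t j - θ t k) := by
  intro k t
  have hc0 : (c : ℂ) ≠ 0 := ofReal_ne_zero.mpr hc.ne'
  have hxk : x t k ≠ 0 := by rw [hpolar]; exact mul_ne_zero hc0 (exp_ne_zero _)
  have hratio : ∀ j, x t j / x t k = exp ((θ t j - θ t k : ℝ) * I) := fun j => by
    rw [hpolar t j, hpolar t k, mul_cexp_div_mul_cexp hc0]
  rw [deriv_phase_eq_im_div hc0 (hpolar · k) (hdyn k t) (hθ k t), add_div,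
    mul_div_cancel_right₀ _ hxk, mul_div_assoc, Finset.sum_div]
  simp only [mul_div_assoc, hratio, add_im, mul_im, im_sum, I_re, I_im, ofReal_re, ofReal_im,
    exp_ofReal_mul_I_im]
  simp

/-- If `x` solves the linear complex model `ẋ = (i diag(ω) + σA)x` with a
constant common modulus `|x_k(t)| = c > 0`, then the (continuous) arguments
`θ_k` satisfy the real Kuramoto model
`θ̇_k = ω_k + σ ∑_j a_{kj} sin(θ_j − θ_k)`. -/
theorem stmt17 (N : ℕ) (ω : Fin N → ℝ) (σ : ℝ) (hσ : 0 < σ)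
    (a : Fin N → Fin N → ℝ) (hdiag : ∀ k, a k k = 0)
    (c : ℝ) (hc : 0 < c)
    (x : ℝ → Fin N → ℂ) (θ : ℝ → Fin N → ℝ)
    (hdyn : ∀ k t, HasDerivAt (fun s => x s k)
      (Complex.I * (ω k : ℂ) * x t k + (σ : ℂ) * ∑ j, (a k j : ℂ) * x t j) t)
    (hmod : ∀ t k, ‖x t k‖ = c)
    (hpolar : ∀ t k, x t k = (c : ℂ) * Complex.exp (Complex.I * (θ t k : ℂ)))
    (hθ : ∀ k t, DifferentiableAt ℝ (fun s => θ s k) t) :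
    ∀ k t, deriv (fun s => θ s k) t
      = ω k + σ * ∑ j, a k j * Real.sin (θ t j - θ t k) :=
  stmt17_general N ω σ a c hc x θ hdyn hpolar hθ
end
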